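/- Let d < 0, let K ⊆ ℝⁿ_+ have the load over-satisfaction property, and suppose there exists p₀ ∈ K with ‖σ^{-1}(p₀ − m)‖ ≤ −d. Then for every p_D ∈ ℝⁿ_+, inf{ c^⊤ z : z ∈ ℝⁿ_+, p_D − z ∈ K } ≤ (‖σ^{-1}(p_D − m)‖ − d) · M_σ. -/

import Mathlib

open scoped BigOperators

/-- The weighted norm `‖σ⁻¹ v‖` (Euclidean norm of `σ⁻¹` applied to `v`). -/
noncomputable def invWeightedNorm {n : ℕ} (σ : Matrix (Fin n) (Fin n) ℝ)
    (v : EuclideanSpace ℝ (Fin n)) : ℝ :=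
  ‖(EuclideanSpace.equiv (Fin n) ℝ).symm (σ⁻¹.mulVec (EuclideanSpace.equiv (Fin n) ℝ v))‖

/-- `M_σ := max_{‖ξ‖ = 1} c^⊤ (σξ)^+`, the maximum over the Euclidean unit sphere. -/
noncomputable def Msigma {n : ℕ} (c : EuclideanSpace ℝ (Fin n))
    (σ : Matrix (Fin n) (Fin n) ℝ) : ℝ :=
  sSup {t : ℝ | ∃ ξ : EuclideanSpace ℝ (Fin n), ‖ξ‖ = 1 ∧
    t = ∑ i, c i * max (σ.mulVec (EuclideanSpace.equiv (Fin n) ℝ ξ) i) 0}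

/-!
Pick `p₀ ∈ K` within weighted distance `-d` of `m` and shed `z = (p_D - p₀)⁺`: then
`p_D - z = min p_D p₀` lies in `K` by load over-satisfaction. Writing `p_D - p₀ = σ u`, positive
homogeneity of `ξ ↦ c^⊤ (σξ)⁺` bounds the cost `c^⊤ z` by `‖u‖ M_σ`, and by the triangle inequality
`‖u‖ ≤ ‖σ⁻¹(p_D - m)‖ + ‖σ⁻¹(p₀ - m)‖ ≤ ‖σ⁻¹(p_D - m)‖ - d`.
-/

open Matrix

section LoadShedding

variable {ι : Type*} [Fintype ι]

theorem sum_mul_max_mul_zero (c w : ι → ℝ) {a : ℝ} (ha : 0 ≤ a) :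
    ∑ i, c i * max (a * w i) 0 = a * ∑ i, c i * max (w i) 0 := by
  rw [Finset.mul_sum]
  refine Finset.sum_congr rfl fun i _ => ?_
  rw [mul_left_comm, mul_max_of_nonneg _ _ ha, mul_zero]

theorem sInf_shedCost_le_of_mem (c : EuclideanSpace ℝ ι) (hc : ∀ j, 0 ≤ c j)
    (K : Set (EuclideanSpace ℝ ι))
    (hKover : ∀ p ∈ K, ∀ p' : EuclideanSpace ℝ ι,
      (∀ j, 0 ≤ p' j) → (∀ j, p' j ≤ p j) → p' ∈ K)
    {p₀ : EuclideanSpace ℝ ι} (hp₀K : p₀ ∈ K) (hp₀ : ∀ j, 0 ≤ p₀ j)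
    {pD : EuclideanSpace ℝ ι} (hpD : ∀ j, 0 ≤ pD j) :
    sInf {t : ℝ | ∃ z : EuclideanSpace ℝ ι,
        (∀ j, 0 ≤ z j) ∧ pD - z ∈ K ∧ t = ∑ j, c j * z j} ≤
      ∑ j, c j * max (pD j - p₀ j) 0 := by
  have hbdd : BddBelow {t : ℝ | ∃ z : EuclideanSpace ℝ ι,
      (∀ j, 0 ≤ z j) ∧ pD - z ∈ K ∧ t = ∑ j, c j * z j} := by
    refine ⟨0, ?_⟩
    rintro t ⟨z, hz, -, rfl⟩
    exact Finset.sum_nonneg fun j _ => mul_nonneg (hc j) (hz j)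
  refine csInf_le hbdd ⟨WithLp.toLp 2 fun j => max (pD j - p₀ j) 0,
    fun j => le_max_right _ _, hKover p₀ hp₀K _ (fun j => ?_) (fun j => ?_), rfl⟩
  · simpa only [PiLp.sub_apply, sub_nonneg] using
      max_le (by linarith [hp₀ j]) (hpD j)
  · simpa only [PiLp.sub_apply, sub_le_comm] using le_max_left (pD j - p₀ j) 0

end LoadShedding

section Msigma

variable {n : ℕ} (c : EuclideanSpace ℝ (Fin n)) (σ : Matrix (Fin n) (Fin n) ℝ)

theorem invWeightedNorm_sub_le (v w : EuclideanSpace ℝ (Fin n)) :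
    invWeightedNorm σ (v - w) ≤ invWeightedNorm σ v + invWeightedNorm σ w := by
  change ‖toEuclideanLin σ⁻¹ (v - w)‖ ≤ ‖toEuclideanLin σ⁻¹ v‖ + ‖toEuclideanLin σ⁻¹ w‖
  rw [map_sub]
  exact norm_sub_le _ _

theorem Msigma_nonneg (hc : ∀ j, 0 ≤ c j) : 0 ≤ Msigma c σ :=
  Real.sSup_nonneg <| by
    rintro t ⟨ξ, -, rfl⟩
    exact Finset.sum_nonneg fun i _ => mul_nonneg (hc i) (le_max_right _ _)

theorem le_Msigma {ξ : EuclideanSpace ℝ (Fin n)} (hξ : ‖ξ‖ = 1) :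
    ∑ i, c i * max ((σ *ᵥ EuclideanSpace.equiv (Fin n) ℝ ξ) i) 0 ≤ Msigma c σ := by
  let f := fun ξ : EuclideanSpace ℝ (Fin n) =>
    ∑ i, c i * max ((σ *ᵥ EuclideanSpace.equiv (Fin n) ℝ ξ) i) 0
  have hf : Continuous f := by fun_prop
  have hbdd := (isCompact_sphere (0 : EuclideanSpace ℝ (Fin n)) 1).bddAbove_image hf.continuousOn
  refine le_csSup (hbdd.mono ?_) ⟨ξ, hξ, rfl⟩
  rintro t ⟨ξ, hξ, rfl⟩
  exact ⟨ξ, mem_sphere_zero_iff_norm.2 hξ, rfl⟩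

theorem sum_mul_max_mulVec_le_norm_mul_Msigma (u : EuclideanSpace ℝ (Fin n)) :
    ∑ i, c i * max ((σ *ᵥ EuclideanSpace.equiv (Fin n) ℝ u) i) 0 ≤ ‖u‖ * Msigma c σ := by
  rcases eq_or_ne u 0 with rfl | hu
  · simp
  have key : ∀ {r : ℝ}, 0 ≤ r → ∀ {ξ : EuclideanSpace ℝ (Fin n)}, ‖ξ‖ = 1 →
      ∑ i, c i * max ((σ *ᵥ EuclideanSpace.equiv (Fin n) ℝ (r • ξ)) i) 0 ≤ r * Msigma c σ := by
    intro r hr ξ hξ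
    simp only [map_smul, mulVec_smul, Pi.smul_apply, smul_eq_mul,
      sum_mul_max_mul_zero _ _ hr]
    exact mul_le_mul_of_nonneg_left (le_Msigma c σ hξ) hr
  have := key (norm_nonneg u) (norm_smul_inv_norm (𝕜 := ℝ) hu)
  rwa [smul_smul, RCLike.ofReal_real_eq_id, id, mul_inv_cancel₀ (norm_ne_zero_iff.2 hu),
    one_smul] at this

end Msigma

theorem loadShed_le_of_neg_dist_general {n : ℕ}
    (c : EuclideanSpace ℝ (Fin n)) (hc : ∀ j, 0 < c j)
    (σ : Matrix (Fin n) (Fin n) ℝ) (hσ : IsUnit σ.det)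
    (m : EuclideanSpace ℝ (Fin n)) (d : ℝ)
    (K : Set (EuclideanSpace ℝ (Fin n)))
    (hKpos : ∀ p ∈ K, ∀ j, 0 ≤ p j)
    (hKover : ∀ p ∈ K, ∀ p' : EuclideanSpace ℝ (Fin n),
      (∀ j, 0 ≤ p' j) → (∀ j, p' j ≤ p j) → p' ∈ K)
    (hp₀ : ∃ p₀ ∈ K, invWeightedNorm σ (p₀ - m) ≤ -d) :
    ∀ pD : EuclideanSpace ℝ (Fin n), (∀ j, 0 ≤ pD j) →
      sInf {t : ℝ | ∃ z : EuclideanSpace ℝ (Fin n),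
          (∀ j, 0 ≤ z j) ∧ pD - z ∈ K ∧ t = ∑ j, c j * z j} ≤
        (invWeightedNorm σ (pD - m) - d) * Msigma c σ := by
  intro pD hpD
  obtain ⟨p₀, hp₀K, hp₀m⟩ := hp₀
  have hc' : ∀ j, 0 ≤ c j := fun j => (hc j).le
  let u := toEuclideanLin σ⁻¹ (pD - p₀)
  have hσu :
      σ *ᵥ EuclideanSpace.equiv (Fin n) ℝ u = EuclideanSpace.equiv (Fin n) ℝ (pD - p₀) := by
    change σ *ᵥ (σ⁻¹ *ᵥ _) = _
    rw [mulVec_mulVec, mul_nonsing_inv σ hσ, one_mulVec]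
    rfl
  have hu : ‖u‖ ≤ invWeightedNorm σ (pD - m) - d := by
    have := invWeightedNorm_sub_le σ (pD - m) (p₀ - m)
    rw [sub_sub_sub_cancel_right] at this
    exact this.trans (by linarith)
  calc _ ≤ ∑ j, c j * max (pD j - p₀ j) 0 :=
        sInf_shedCost_le_of_mem c hc' K hKover hp₀K (hKpos p₀ hp₀K) hpD
    _ = ∑ j, c j * max ((σ *ᵥ EuclideanSpace.equiv (Fin n) ℝ u) j) 0 := by rw [hσu]; rfl
    _ ≤ ‖u‖ * Msigma c σ := sum_mul_max_mulVec_le_norm_mul_Msigma c σ u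
    _ ≤ _ := mul_le_mul_of_nonneg_right hu (Msigma_nonneg c σ hc')

/-- if `d < 0`, `K ⊆ ℝⁿ_+` has the load over-satisfaction property and some
`p₀ ∈ K` lies within weighted distance `−d` of `m`, then for every `p_D ∈ ℝⁿ_+` the
minimal load-shedding cost is at most `(‖σ^{-1}(p_D − m)‖ − d) · M_σ`. -/
theorem loadShed_le_of_neg_dist {n : ℕ} (hn : 1 ≤ n)
    (c : EuclideanSpace ℝ (Fin n)) (hc : ∀ j, 0 < c j)
    (σ : Matrix (Fin n) (Fin n) ℝ) (hσ : IsUnit σ.det)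
    (m : EuclideanSpace ℝ (Fin n)) (d : ℝ) (hd : d < 0)
    (K : Set (EuclideanSpace ℝ (Fin n)))
    (hKpos : ∀ p ∈ K, ∀ j, 0 ≤ p j)
    (hKover : ∀ p ∈ K, ∀ p' : EuclideanSpace ℝ (Fin n),
      (∀ j, 0 ≤ p' j) → (∀ j, p' j ≤ p j) → p' ∈ K)
    (hp₀ : ∃ p₀ ∈ K, invWeightedNorm σ (p₀ - m) ≤ -d) :
    ∀ pD : EuclideanSpace ℝ (Fin n), (∀ j, 0 ≤ pD j) →
      sInf {t : ℝ | ∃ z : EuclideanSpace ℝ (Fin n),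
          (∀ j, 0 ≤ z j) ∧ pD - z ∈ K ∧ t = ∑ j, c j * z j} ≤
        (invWeightedNorm σ (pD - m) - d) * Msigma c σ :=
  loadShed_le_of_neg_dist_general c hc σ hσ m d K hKpos hKover hp₀
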